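/- arXiv:2209.02118 — 6 statements merged into one kernel-verified Lean document; each statement's English description precedes it below -/
import Mathlib

section
/- If f : ℝⁿ → ℝ is radially epidifferentiable at x̄ (i.e., the quantity f^r(x̄;h) = inf_{t>0} liminf_{u→h} (f(x̄+tu) − f(x̄))/t exists and is finite for every direction h), then f is lower semicontinuous at x̄. -/
open Filter Topology

/-- The radial epiderivative of `f` at `x` in direction `h`:
`f^r(x;h) = inf_{t>0} liminf_{u → h} (f(x + t u) - f(x)) / t`, valued in `EReal`. -/
noncomputable def radEpi {X : Type*} [NormedAddCommGroup X] [NormedSpace ℝ X]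
    (f : X → ℝ) (x h : X) : EReal :=
  ⨅ t : Set.Ioi (0 : ℝ),
    Filter.liminf (fun u : X => (((f (x + (t : ℝ) • u) - f x) / (t : ℝ) : ℝ) : EReal)) (𝓝 h)

/-- If `f : ℝⁿ → ℝ` is radially epidifferentiable at `x₀` (the radial epiderivative is
finite in every direction), then `f` is lower semicontinuous at `x₀`. -/
theorem radially_epidifferentiable_implies_lsc {n : ℕ}
    (f : EuclideanSpace ℝ (Fin n) → ℝ) (x₀ : EuclideanSpace ℝ (Fin n))
    (hdiff : ∀ h : EuclideanSpace ℝ (Fin n), ∃ r : ℝ, radEpi f x₀ h = (r : EReal)) :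
    LowerSemicontinuousAt f x₀ := by
  obtain ⟨r, hr⟩ := hdiff 0
  intro y hy
  by_contra hcon
  rw [Filter.not_eventually] at hcon
  simp only [not_lt] at hcon
  -- hcon : ∃ᶠ x in 𝓝 x₀, f x ≤ y
  have key : ∀ t : ℝ, 0 < t → r ≤ (y - f x₀) / t := by
    intro t ht
    have hg : Tendsto (fun x : EuclideanSpace ℝ (Fin n) => t⁻¹ • (x - x₀)) (𝓝 x₀)
        (𝓝 (0 : EuclideanSpace ℝ (Fin n))) := by
      have : Continuous (fun x : EuclideanSpace ℝ (Fin n) => t⁻¹ • (x - x₀)) :=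
        (continuous_id.sub continuous_const).const_smul t⁻¹
      have h0 := this.continuousAt (x := x₀)
      simpa [ContinuousAt] using h0
    have hfreq : ∃ᶠ u in 𝓝 (0 : EuclideanSpace ℝ (Fin n)), f (x₀ + t • u) ≤ y := by
      apply hg.frequently
      refine hcon.mono fun x hx => ?_
      rwa [smul_inv_smul₀ ht.ne', add_sub_cancel]
    have hlim : Filter.liminf
        (fun u : EuclideanSpace ℝ (Fin n) => (((f (x₀ + t • u) - f x₀) / t : ℝ) : EReal))
        (𝓝 (0 : EuclideanSpace ℝ (Fin n))) ≤ (((y - f x₀) / t : ℝ) : EReal) := by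
      refine Filter.liminf_le_of_frequently_le ?_ (Filter.isBoundedUnder_of ⟨⊥, fun x => bot_le⟩)
      refine hfreq.mono fun u hu => ?_
      exact_mod_cast div_le_div_of_nonneg_right (by linarith) ht.le
    have hle : (r : EReal) ≤ (((y - f x₀) / t : ℝ) : EReal) := by
      calc (r : EReal) = radEpi f x₀ 0 := hr.symm
        _ ≤ _ := iInf_le _ (⟨t, ht⟩ : Set.Ioi (0 : ℝ))
        _ ≤ _ := hlim
    exact_mod_cast hle
  set c : ℝ := f x₀ - y with hc_def
  have hc : 0 < c := sub_pos.mpr hy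
  have ht : 0 < c / (|r| + c) := div_pos hc (by positivity)
  have h1 := key _ ht
  rw [le_div_iff₀ ht] at h1
  have h2 : -|r| ≤ r := neg_abs_le r
  have h3 : (0:ℝ) ≤ |r| := abs_nonneg r
  have hy' : y - f x₀ = -c := by ring
  rw [hy'] at h1
  have hs : (0:ℝ) < |r| + c := by positivity
  have hmul := mul_le_mul_of_nonneg_right h1 hs.le
  have hcan : c / (|r| + c) * (|r| + c) = c := div_mul_cancel₀ c hs.ne'
  nlinarith [mul_nonneg h3 hc.le]
end

section
/- For every x ∈ X, the radial epiderivative satisfies the global support inequality f^r(x̄; x − x̄) ≤ f(x) − f(x̄). -/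
open Filter Topology

/-- Global support inequality: `f^r(x₀; x - x₀) ≤ f(x) - f(x₀)` for every `x`. -/
theorem radEpi_le_sub
    {X : Type*} [NormedAddCommGroup X] [NormedSpace ℝ X]
    (f : X → ℝ) (x₀ : X) :
    ∀ x : X, radEpi f x₀ (x - x₀) ≤ ((f x - f x₀ : ℝ) : EReal) := by
  intro x
  refine le_trans (iInf_le _ ⟨1, Set.mem_Ioi.mpr one_pos⟩) ?_
  calc Filter.liminf (fun u : X => (((f (x₀ + (1 : ℝ) • u) - f x₀) / (1 : ℝ) : ℝ) : EReal)) (𝓝 (x - x₀))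
      ≤ Filter.liminf (fun u : X => (((f (x₀ + (1 : ℝ) • u) - f x₀) / (1 : ℝ) : ℝ) : EReal)) (pure (x - x₀)) :=
        Filter.liminf_le_liminf_of_le (pure_le_nhds _)
    _ = _ := by simp [Filter.liminf_eq, Filter.eventually_pure]; exact csSup_Iic
end

section
/- A radially epidifferentiable function f attains its global minimum at x̄ if and only if the function h ↦ f^r(x̄;h) attains its minimum value 0 at h = 0, i.e., f^r(x̄;h) ≥ 0 for all h. -/
open Filter Topology

/-- Global optimality: `f` attains its global minimum at `x₀` iff the radial
epiderivative `h ↦ f^r(x₀;h)` attains its minimum value `0` at `h = 0`. -/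
theorem global_min_iff_radEpi_nonneg
    {X : Type*} [NormedAddCommGroup X] [NormedSpace ℝ X]
    (f : X → ℝ) (x₀ : X)
    (hdiff : ∀ h : X, ∃ r : ℝ, radEpi f x₀ h = (r : EReal))
    (h0 : radEpi f x₀ 0 = (0 : EReal)) :
    (∀ x : X, f x₀ ≤ f x) ↔ (∀ h : X, (0 : EReal) ≤ radEpi f x₀ h) := by
  constructor
  · intro hmin h
    refine le_iInf fun t => ?_
    refine Filter.le_liminf_of_le (by isBoundedDefault) ?_
    refine Filter.Eventually.of_forall fun u => ?_
    have ht : (0 : ℝ) < (t : ℝ) := t.2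
    have hnum : (0 : ℝ) ≤ f (x₀ + (t : ℝ) • u) - f x₀ := by
      have := hmin (x₀ + (t : ℝ) • u); linarith
    exact_mod_cast div_nonneg hnum ht.le
  · intro hge x
    have key := hge (x - x₀)
    have h1 : (1 : ℝ) ∈ Set.Ioi (0 : ℝ) := by norm_num
    have hle : radEpi f x₀ (x - x₀) ≤
        Filter.liminf (fun u : X =>
          (((f (x₀ + (1 : ℝ) • u) - f x₀) / (1 : ℝ) : ℝ) : EReal)) (𝓝 (x - x₀)) :=
      iInf_le _ (⟨1, h1⟩ : Set.Ioi (0 : ℝ))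
    have hval : Filter.liminf (fun u : X =>
          (((f (x₀ + (1 : ℝ) • u) - f x₀) / (1 : ℝ) : ℝ) : EReal)) (𝓝 (x - x₀)) ≤
        (((f (x₀ + (1 : ℝ) • (x - x₀)) - f x₀) / (1 : ℝ) : ℝ) : EReal) := by
      refine Filter.liminf_le_of_frequently_le ?_ (by isBoundedDefault)
      have : ∃ᶠ u in pure (x - x₀),
          (((f (x₀ + (1 : ℝ) • u) - f x₀) / (1 : ℝ) : ℝ) : EReal) ≤
          (((f (x₀ + (1 : ℝ) • (x - x₀)) - f x₀) / (1 : ℝ) : ℝ) : EReal) := by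
        exact Filter.Eventually.frequently (Filter.eventually_pure.mpr le_rfl)
      exact this.filter_mono (pure_le_nhds _)
    have := le_trans key (le_trans hle hval)
    have hxx : x₀ + (1 : ℝ) • (x - x₀) = x := by simp
    rw [hxx, div_one] at this
    have : (0 : ℝ) ≤ f x - f x₀ := by exact_mod_cast this
    linarith
end

section
/- Let f : ℝⁿ → ℝ have finite Clarke directional derivative f°(x̄;h) for every h, where f°(x̄;·) is positively homogeneous and Lipschitz continuous. If f(x) − f(x̄) ≥ f°(x̄;x−x̄) for all x ∈ ℝⁿ, then the radial epiderivative f^r(x̄;h) exists, is finite, and equals f°(x̄;h) for every h. -/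
open Filter Topology

/-- The Clarke directional derivative of `f` at `x` in direction `h`:
`f°(x;h) = limsup_{t ↓ 0, y → x} (f(y + t h) - f(y)) / t`, valued in `EReal`. -/
noncomputable def clarkeDer {X : Type*} [NormedAddCommGroup X] [NormedSpace ℝ X]
    (f : X → ℝ) (x h : X) : EReal :=
  Filter.limsup (fun p : ℝ × X => (((f (p.2 + p.1 • h) - f p.2) / p.1 : ℝ) : EReal))
    ((𝓝[>] (0 : ℝ)) ×ˢ 𝓝 x)

lemma limsup_map_aux {α β : Type*} (u : β → EReal) (m : α → β) (F : Filter α) :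
    Filter.limsup u (Filter.map m F) = Filter.limsup (fun a => u (m a)) F := by
  simp [Filter.limsup, Filter.map_map]; rfl

lemma liminf_pure_aux {α : Type*} (u : α → EReal) (a : α) :
    Filter.liminf u (pure a) = u a := by
  simp only [Filter.liminf, Filter.limsInf, Filter.map_pure, Filter.eventually_pure]
  exact le_antisymm (sSup_le fun b hb => hb) (le_sSup (le_refl (u a)))

/-- If the Clarke directional derivative of `f` at `x₀` is the finite, positively
homogeneous, Lipschitz function `g`, and `f(x) - f(x₀) ≥ f°(x₀; x - x₀)` for all `x`,
then the radial epiderivative exists, is finite, and equals `g` in every direction. -/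
theorem radEpi_eq_clarke_of_support {n : ℕ}
    (f : EuclideanSpace ℝ (Fin n) → ℝ) (x₀ : EuclideanSpace ℝ (Fin n))
    (g : EuclideanSpace ℝ (Fin n) → ℝ)
    (hg : ∀ h, clarkeDer f x₀ h = ((g h : ℝ) : EReal))
    (hpos : ∀ (l : ℝ), 0 < l → ∀ h, g (l • h) = l * g h)
    (hlip : ∃ K : NNReal, LipschitzWith K g)
    (hsupp : ∀ x, f x - f x₀ ≥ g (x - x₀)) :
    ∀ h, radEpi f x₀ h = ((g h : ℝ) : EReal) := by
  obtain ⟨K, hK⟩ := hlip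
  have hgc : Continuous g := hK.continuous
  intro h
  -- pointwise lower bound
  have key : ∀ t : ℝ, 0 < t → ∀ u : EuclideanSpace ℝ (Fin n),
      (g u : EReal) ≤ (((f (x₀ + t • u) - f x₀) / t : ℝ) : EReal) := by
    intro t ht u
    rw [EReal.coe_le_coe_iff, le_div_iff₀ ht]
    have h1 := hsupp (x₀ + t • u)
    simp only [add_sub_cancel_left] at h1
    rw [hpos t ht u] at h1
    linarith
  -- lower bound: g h ≤ radEpi
  have lower : ((g h : ℝ) : EReal) ≤ radEpi f x₀ h := by
    apply le_iInf
    rintro ⟨t, ht⟩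
    have h1 : Filter.liminf (fun u : EuclideanSpace ℝ (Fin n) => ((g u : ℝ) : EReal)) (𝓝 h)
        = (g h : EReal) :=
      Filter.Tendsto.liminf_eq ((continuous_coe_real_ereal.tendsto _).comp (hgc.tendsto h))
    rw [← h1]
    exact Filter.liminf_le_liminf
      (Filter.Eventually.of_forall fun u => key t (Set.mem_Ioi.mp ht) u)
  -- upper bound
  set φ : ℝ → EReal := fun t => (((f (x₀ + t • h) - f x₀) / t : ℝ) : EReal) with hφ
  have upper1 : radEpi f x₀ h ≤ ⨅ t : Set.Ioi (0 : ℝ), φ (t : ℝ) := by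
    apply iInf_mono
    rintro ⟨t, _⟩
    calc Filter.liminf
          (fun u : EuclideanSpace ℝ (Fin n) => (((f (x₀ + t • u) - f x₀) / t : ℝ) : EReal)) (𝓝 h)
        ≤ Filter.liminf
          (fun u : EuclideanSpace ℝ (Fin n) => (((f (x₀ + t • u) - f x₀) / t : ℝ) : EReal))
          (pure h) := Filter.liminf_le_liminf_of_le (pure_le_nhds h)
      _ = φ t := liminf_pure_aux _ h
  have upper2 : (⨅ t : Set.Ioi (0 : ℝ), φ (t : ℝ)) ≤ Filter.limsup φ (𝓝[>] (0 : ℝ)) := by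
    refine le_trans (Filter.le_liminf_of_le (by isBoundedDefault) ?_) Filter.liminf_le_limsup
    filter_upwards [self_mem_nhdsWithin] with t ht
    exact iInf_le (fun s : Set.Ioi (0:ℝ) => φ (s : ℝ)) ⟨t, ht⟩
  have upper3 : Filter.limsup φ (𝓝[>] (0 : ℝ)) ≤ ((g h : ℝ) : EReal) := by
    rw [← hg h]
    unfold clarkeDer
    have hmap : (𝓝[>] (0 : ℝ)) ×ˢ (pure x₀ : Filter (EuclideanSpace ℝ (Fin n))) =
        Filter.map (fun t : ℝ => (t, x₀)) (𝓝[>] (0 : ℝ)) := Filter.prod_pure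
    have hle := Filter.limsup_le_limsup_of_le
      (f := (𝓝[>] (0 : ℝ)) ×ˢ (pure x₀ : Filter (EuclideanSpace ℝ (Fin n))))
      (g := (𝓝[>] (0 : ℝ)) ×ˢ 𝓝 x₀)
      (Filter.prod_mono le_rfl (pure_le_nhds x₀))
      (u := fun p : ℝ × EuclideanSpace ℝ (Fin n) =>
        (((f (p.2 + p.1 • h) - f p.2) / p.1 : ℝ) : EReal))
    refine le_trans ?_ hle
    rw [hmap, limsup_map_aux]
  exact le_antisymm (upper1.trans (upper2.trans upper3)) lower
end

section
/- For the function f(x) = x·sin(1/x) for x ≠ 0, f(0) = 0 on ℝ, the radial epiderivative at 0 equals −|h|: f^r(0;h) = inf_{t>0} liminf_{u→h}(f(tu))/t = −|h| for all h ∈ ℝ. -/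
/-!
Since `|x sin(1/x)| ≤ |x|`, the function is continuous everywhere, so the liminf in `u` is just
the value at `u = h`: `f^r(0;h) = inf_{t>0} f(th)/t`. Each quotient `f(th)/t` lies in
`[-|h|, |h|]`, and the bound `-|h|` is attained because `f` is even and `f(x₀) = -x₀` at
`x₀ = 1/(π/2 + π)`, where `sin(1/x₀) = -1`; take `t = x₀/|h|`.
-/

open Filter Topology Real

noncomputable def fSin : ℝ → ℝ := fun x => if x = 0 then 0 else x * Real.sin (1 / x)

theorem radEpi_eq_iInf_of_continuousAt {X : Type*} [NormedAddCommGroup X] [NormedSpace ℝ X]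
    {f : X → ℝ} {x h : X} (hf : ∀ t : ℝ, 0 < t → ContinuousAt f (x + t • h)) :
    radEpi f x h = ⨅ t : Set.Ioi (0 : ℝ), (((f (x + (t : ℝ) • h) - f x) / (t : ℝ) : ℝ) : EReal) := by
  refine iInf_congr fun t => Tendsto.liminf_eq ?_
  have hft := hf t t.2
  have hquot : ContinuousAt (fun u : X => (f (x + (t : ℝ) • u) - f x) / (t : ℝ)) h := by
    fun_prop
  exact (continuous_coe_real_ereal.tendsto _).comp hquot

@[simp]
theorem fSin_zero : fSin 0 = 0 := if_pos rfl

theorem fSin_of_ne_zero {x : ℝ} (hx : x ≠ 0) : fSin x = x * sin (1 / x) := if_neg hx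

theorem fSin_neg (x : ℝ) : fSin (-x) = fSin x := by
  rcases eq_or_ne x 0 with rfl | hx
  · simp
  · rw [fSin_of_ne_zero (neg_ne_zero.mpr hx), fSin_of_ne_zero hx, one_div_neg_eq_neg_one_div,
      sin_neg, neg_mul_neg]

theorem fSin_abs (x : ℝ) : fSin |x| = fSin x := by
  rcases abs_choice x with hx | hx <;> rw [hx]
  exact fSin_neg x

theorem abs_fSin_le (x : ℝ) : |fSin x| ≤ |x| := by
  rcases eq_or_ne x 0 with rfl | hx
  · simp
  · rw [fSin_of_ne_zero hx, abs_mul]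
    exact mul_le_of_le_one_right (abs_nonneg x) (abs_sin_le_one _)

theorem continuous_fSin : Continuous fSin := by
  refine continuous_iff_continuousAt.mpr fun x => ?_
  rcases eq_or_ne x 0 with rfl | hx
  · rw [ContinuousAt, fSin_zero]
    exact squeeze_zero_norm abs_fSin_le tendsto_norm_zero
  · have hev : (fun y => y * sin (1 / y)) =ᶠ[𝓝 x] fSin :=
      (eventually_ne_nhds hx).mono fun y hy => (fSin_of_ne_zero hy).symm
    exact (continuousAt_id.mul
      (continuous_sin.continuousAt.comp (continuousAt_const.div continuousAt_id hx))).congr hev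

theorem neg_abs_le_fSin_mul_div {t : ℝ} (ht : 0 < t) (h : ℝ) : -|h| ≤ fSin (t * h) / t := by
  have hbound : |fSin (t * h) / t| ≤ |h| := by
    rw [abs_div, abs_of_pos ht, div_le_iff₀ ht, mul_comm |h|]
    simpa [abs_mul, abs_of_pos ht] using abs_fSin_le (t * h)
  exact neg_le_of_abs_le hbound

theorem fSin_inv_three_pi_div_two : fSin (1 / (π / 2 + π)) = -(1 / (π / 2 + π)) := by
  rw [fSin_of_ne_zero (by positivity), one_div_one_div, sin_add_pi, sin_pi_div_two, mul_neg_one]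

theorem exists_pos_fSin_mul_div_eq_neg_abs (h : ℝ) : ∃ t > 0, fSin (t * h) / t = -|h| := by
  rcases eq_or_ne h 0 with rfl | hh
  · exact ⟨1, one_pos, by simp⟩
  set x₀ := 1 / (π / 2 + π)
  have hx₀pos : 0 < x₀ := by positivity
  have habs : 0 < |h| := abs_pos.mpr hh
  refine ⟨x₀ / |h|, by positivity, ?_⟩
  have hprod : |x₀ / |h| * h| = x₀ := by
    rw [abs_mul, abs_div, abs_abs, abs_of_pos hx₀pos, div_mul_cancel₀ _ habs.ne']
  rw [← fSin_abs, hprod, fSin_inv_three_pi_div_two, neg_div, div_div_cancel₀ hx₀pos.ne']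

/-- For `f(x) = x sin(1/x)` (with `f(0) = 0`), the radial epiderivative at `0`
is `f^r(0;h) = -|h|`. -/
theorem radEpi_xSinInv : ∀ h : ℝ, radEpi fSin 0 h = ((-|h| : ℝ) : EReal) := by
  intro h
  rw [radEpi_eq_iInf_of_continuousAt fun _ _ => continuous_fSin.continuousAt]
  simp only [zero_add, smul_eq_mul, fSin_zero, sub_zero]
  obtain ⟨t₀, ht₀, hmin⟩ := exists_pos_fSin_mul_div_eq_neg_abs h
  refine le_antisymm (iInf_le_of_le ⟨t₀, ht₀⟩ (le_of_eq (congrArg _ hmin))) (le_iInf fun t => ?_)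
  exact EReal.coe_le_coe_iff.mpr (neg_abs_le_fSin_mul_div t.2 h)
end

section
/- For a convex function f : ℝⁿ → ℝ and any x̄, the radial epiderivative coincides with the directional derivative: f^r(x̄;h) = f′(x̄;h) for every h, where f′(x̄;h) = lim_{t↓0}(f(x̄+th)−f(x̄))/t exists by convexity. -/
open Filter Topology

theorem ConvexOn.monotoneOn_directional_quotient {X : Type*} [AddCommGroup X] [Module ℝ X]
    {f : X → ℝ} (hf : ConvexOn ℝ Set.univ f) (x h : X) :
    MonotoneOn (fun t : ℝ => (f (x + t • h) - f x) / t) (Set.Ioi 0) := by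
  have hline : ConvexOn ℝ Set.univ (f ∘ AffineMap.lineMap x (x + h)) :=
    hf.comp_affineMap (AffineMap.lineMap x (x + h))
  intro s hs t ht hst
  have := hline.secant_mono (Set.mem_univ 0) (Set.mem_univ s) (Set.mem_univ t)
    (ne_of_gt hs) (ne_of_gt ht) hst
  simpa [AffineMap.lineMap_apply, add_comm] using this

theorem radEpi_eq_iInf_of_continuous {X : Type*} [NormedAddCommGroup X] [NormedSpace ℝ X]
    {f : X → ℝ} (hf : Continuous f) (x h : X) :
    radEpi f x h = ⨅ t : Set.Ioi (0 : ℝ), (((f (x + (t : ℝ) • h) - f x) / t : ℝ) : EReal) := by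
  refine iInf_congr fun t => Tendsto.liminf_eq ?_
  exact (continuous_coe_real_ereal.comp (by fun_prop)).tendsto h

theorem MonotoneOn.iInf_Ioi_eq_of_tendsto {α β : Type*} [LinearOrder α] [TopologicalSpace α]
    [OrderTopology α] [DenselyOrdered α] [NoMaxOrder α] [CompleteLinearOrder β]
    [TopologicalSpace β] [OrderTopology β] {g : α → β} {a : α} {L : β}
    (hg : MonotoneOn g (Set.Ioi a)) (hL : Tendsto g (𝓝[>] a) (𝓝 L)) :
    ⨅ t : Set.Ioi a, g t = L := by
  refine le_antisymm ?_ (le_iInf fun t => ?_)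
  · refine ge_of_tendsto hL ?_
    filter_upwards [self_mem_nhdsWithin] with t ht using iInf_le (fun t : Set.Ioi a => g t) ⟨t, ht⟩
  · refine le_of_tendsto hL ?_
    filter_upwards [Ioc_mem_nhdsGT t.2] with s hs using hg hs.1 t.2 hs.2

/-- For a convex function `f : ℝⁿ → ℝ`, the radial epiderivative coincides with the
directional derivative: `f^r(x₀;h) = f'(x₀;h)` for every `h`. -/
theorem radEpi_eq_dirDeriv_of_convex {n : ℕ}
    (f : EuclideanSpace ℝ (Fin n) → ℝ) (hconv : ConvexOn ℝ Set.univ f)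
    (x₀ : EuclideanSpace ℝ (Fin n)) (d : EuclideanSpace ℝ (Fin n) → ℝ)
    (hd : ∀ h, Filter.Tendsto (fun t : ℝ => (f (x₀ + t • h) - f x₀) / t)
      (𝓝[>] (0 : ℝ)) (𝓝 (d h))) :
    ∀ h, radEpi f x₀ h = ((d h : ℝ) : EReal) := by
  intro h
  have hcont : Continuous f := continuousOn_univ.mp (hconv.continuousOn isOpen_univ)
  rw [radEpi_eq_iInf_of_continuous hcont]
  exact MonotoneOn.iInf_Ioi_eq_of_tendsto
    (EReal.coe_strictMono.monotone.comp_monotoneOn (hconv.monotoneOn_directional_quotient x₀ h))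
    ((continuous_coe_real_ereal.tendsto _).comp (hd h))
end
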